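/- Let σ ≥ 2, and let T and P be strings over [0..σ). Set k = ⌈log₂ σ⌉, P' = ebin_k(P), T' = ebin_k(T), and Δ = |T'| − |T|. Then RangeBeg(P,T) = RangeBeg(P',T') − Δ. -/

import Mathlib

/-- Strict lexicographic order on strings: `U ≺ V` iff `U` is a proper prefix of `V`,
or `U` and `V` first differ at a position where `U` has the smaller symbol. -/
def LexLt {α : Type*} [LT α] (U V : List α) : Prop := List.Lex (· < ·) U V

/-- Non-strict lexicographic order on strings. -/
def LexLe {α : Type*} [LT α] (U V : List α) : Prop := LexLt U V ∨ U = V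

/-- The suffix `T[j..|T|]` of `T` (1-based index `j`). -/
def Suf {α : Type*} (T : List α) (j : ℕ) : List α := T.drop (j - 1)

/-- `Occ P T` is the set of starting positions (1-based) of occurrences of `P` in `T`. -/
def Occ {α : Type*} (P T : List α) : Set ℕ :=
  { j | 1 ≤ j ∧ j + P.length ≤ T.length + 1 ∧ (Suf T j).take P.length = P }

/-- `RangeBeg P T` = number of suffixes of `T` lexicographically smaller than `P`. -/
noncomputable def RangeBeg {α : Type*} [LT α] (P T : List α) : ℕ :=
  { j | 1 ≤ j ∧ j ≤ T.length ∧ LexLt (Suf T j) P }.ncard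

/-- `RangeEnd P T = RangeBeg P T + |Occ P T|`. -/
noncomputable def RangeEnd {α : Type*} [LT α] (P T : List α) : ℕ :=
  RangeBeg P T + (Occ P T).ncard

/-- `LexRange P₁ P₂ T` = positions `j ∈ [1..|T|]` with `P₁ ⪯ T[j..|T|] ≺ P₂`. -/
def LexRange {α : Type*} [LT α] (P₁ P₂ T : List α) : Set ℕ :=
  { j | 1 ≤ j ∧ j ≤ T.length ∧ LexLe P₁ (Suf T j) ∧ LexLt (Suf T j) P₂ }

/-- `sa` is the suffix array of `T` (1-based): a permutation of `[1..|T|]` listing the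
starting positions of the suffixes of `T` in increasing lexicographic order. -/
def IsSuffixArray {α : Type*} [LT α] (T : List α) (sa : ℕ → ℕ) : Prop :=
  (∀ i, 1 ≤ i → i ≤ T.length → 1 ≤ sa i ∧ sa i ≤ T.length) ∧
  (∀ j, 1 ≤ j → j ≤ T.length → ∃ i, 1 ≤ i ∧ i ≤ T.length ∧ sa i = j) ∧
  (∀ i j, 1 ≤ i → i < j → j ≤ T.length → LexLt (Suf T (sa i)) (Suf T (sa j)))

/-- `binSym k x` : the length-`k` binary representation of `x` (MSB first, leading zeros). -/
def binSym (k x : ℕ) : List ℕ := (List.range k).map fun i => x / 2 ^ (k - 1 - i) % 2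

/-- `binStr k S` = `bin_k(S[1]) · bin_k(S[2]) · … · bin_k(S[|S|])`. -/
def binStr (k : ℕ) (S : List ℕ) : List ℕ := (S.map (binSym k)).flatten

/-- `ebinSym k x = 1^{k+1} · 0 · bin_k(x) · 0`. -/
def ebinSym (k x : ℕ) : List ℕ := List.replicate (k + 1) 1 ++ [0] ++ binSym k x ++ [0]

/-- `ebinStr k S` = concatenation of `ebin_k(S[i])` for `i = 1, …, |S|`. -/
def ebinStr (k : ℕ) (S : List ℕ) : List ℕ := (S.map (ebinSym k)).flatten

/-- `sEnc k i` : length-`k` base-2 representation of `i` with `0 ↦ 2` and `1 ↦ 3`. -/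
def sEnc (k i : ℕ) : List ℕ := (binSym k i).map (· + 2)

/-- `SeqToString m W = ⊙_{i=1}^{m} rev(W[i]) · 4 · s(i-1)` with `k = 1 + ⌊log₂ m⌋`. -/
def SeqToString (m : ℕ) (W : ℕ → List ℕ) : List ℕ :=
  ((List.range m).map
    fun i => (W (i + 1)).reverse ++ [4] ++ sEnc (1 + Nat.log 2 m) i).flatten

/-- `PermSeqToString m π W = ⊙_{i=1}^{m} rev(W[π[i]]) · 4 · s(π[i]-1)`. -/
def PermSeqToString (m : ℕ) (perm : ℕ → ℕ) (W : ℕ → List ℕ) : List ℕ :=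
  ((List.range m).map
    fun i => (W (perm (i + 1))).reverse ++ [4]
      ++ sEnc (1 + Nat.log 2 m) (perm (i + 1) - 1)).flatten

/-- `PrefixRank W j X = |{ i ∈ [1..j] : X is a prefix of W[i] }|`. -/
noncomputable def PrefixRank {α : Type*} (W : ℕ → List α) (j : ℕ) (X : List α) : ℕ :=
  { i | 1 ≤ i ∧ i ≤ j ∧ X <+: W i }.ncard

/-- `p` is the `r`-th smallest element of the set `A ⊆ ℕ`. -/
def IsKthSmallest (A : Set ℕ) (r p : ℕ) : Prop :=
  p ∈ A ∧ (A ∩ Set.Iic p).ncard = r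

/-- Ceiling division `⌈a / b⌉` of positive naturals. -/
def cdiv (a b : ℕ) : ℕ := (a + b - 1) / b

/-- Alphabet inversion: `inv_σ(S)[i] = σ - 1 - S[i]`. -/
def invStr (σ : ℕ) (S : List ℕ) : List ℕ := S.map fun a => σ - 1 - a

/-- `p` is a period of `S`: `1 ≤ p ≤ |S|` and `S[i] = S[i+p]` for all `i ∈ [1..|S|-p]`. -/
def IsPeriod {α : Type*} (S : List α) (p : ℕ) : Prop :=
  1 ≤ p ∧ p ≤ S.length ∧ S.drop p <+: S

/-- `per S`: the smallest period of `S`. -/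
noncomputable def per {α : Type*} (S : List α) : ℕ := sInf { p | IsPeriod S p }

/-- `P` is `τ`-periodic: `|P| ≥ 3τ - 1` and `per(P[1..3τ-1]) ≤ τ/3`. -/
noncomputable def TauPeriodic {α : Type*} (τ : ℕ) (P : List α) : Prop :=
  3 * τ ≤ P.length + 1 ∧ 3 * per (P.take (3 * τ - 1)) ≤ τ

/-- `R(τ,T) = { i ∈ [1..n-3τ+2] : per(T[i..i+3τ-2]) ≤ τ/3 }`. -/
noncomputable def Rset {α : Type*} (τ : ℕ) (T : List α) : Set ℕ :=
  { i | 1 ≤ i ∧ i + 3 * τ ≤ T.length + 2 ∧ 3 * per ((Suf T i).take (3 * τ - 1)) ≤ τ }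

/-- `S` is a `τ`-synchronizing set of `T` (consistency and density conditions). -/
noncomputable def IsSyncSet {α : Type*} (τ : ℕ) (T : List α) (S : Set ℕ) : Prop :=
  (∀ j ∈ S, 1 ≤ j ∧ j + 2 * τ ≤ T.length + 1) ∧
  (∀ i j, 1 ≤ i → i + 2 * τ ≤ T.length + 1 → 1 ≤ j → j + 2 * τ ≤ T.length + 1 →
    (Suf T i).take (2 * τ) = (Suf T j).take (2 * τ) → (i ∈ S ↔ j ∈ S)) ∧
  (∀ i, 1 ≤ i → i + 3 * τ ≤ T.length + 2 → (S ∩ Set.Ico i (i + τ) = ∅ ↔ i ∈ Rset τ T))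

/-- `succ_S(x) = min { x' ∈ S : x' ≥ x }`. -/
noncomputable def succS (S : Set ℕ) (x : ℕ) : ℕ := sInf (S ∩ Set.Ici x)

/-- `DistPrefixes(τ,T,S) = { T[j..succ_S(j)+2τ) : j ∈ [1..n-3τ+2] \ R(τ,T) }`. -/
noncomputable def DistPrefixes {α : Type*} (τ : ℕ) (T : List α) (S : Set ℕ) : Set (List α) :=
  (fun j => (Suf T j).take (succS S j + 2 * τ - j)) ''
    { j | 1 ≤ j ∧ j + 3 * τ ≤ T.length + 2 ∧ j ∉ Rset τ T }

/-- `r` is the value of the prefix RMQ: the smallest index `i ∈ (b..e]` with `X` a prefix of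
`W[i]` minimizing `A[i]` (ties broken towards the smaller index). -/
def IsPrefixRMQ (A : ℕ → ℤ) (W : ℕ → List ℕ) (b e : ℕ) (X : List ℕ) (r : ℕ) : Prop :=
  (b < r ∧ r ≤ e ∧ X <+: W r) ∧
  (∀ i, b < i → i ≤ e → X <+: W i → A r ≤ A i) ∧
  (∀ i, b < i → i ≤ e → X <+: W i → A i = A r → r ≤ i)

/-!
Put `k = ⌈log₂ σ⌉`, so every symbol is below `2 ^ k`. Since `bin_k` is strictly increasing
with fixed length, `ebin_k` preserves and reflects the lexicographic order, so a suffix of `T'`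
starting at a block boundary compares with `P'` as the corresponding suffix of `T` compares
with `P`. Every other suffix of `T'` starts strictly inside a block and so begins with at most
`k` ones followed by a `0`, while `P'` (for nonempty `P`) begins with `k + 1` ones: these
`(2k + 2)|T| = |T'| - |T|` suffixes are all smaller than `P'`.
-/

theorem List.append_lt_append_of_length_eq {α : Type*} [LT α] {x y : List α}
    (hlen : x.length = y.length) (h : x < y) (u v : List α) : x ++ u < y ++ v := by
  induction h with
  | nil => simp at hlen
  | rel hab => exact List.Lex.rel hab
  | cons _ ih => exact List.Lex.cons (ih (by simpa using hlen))

theorem replicate_one_append_zero_lt {b k : ℕ} (hb : b ≤ k) (s t : List ℕ) :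
    List.replicate b 1 ++ 0 :: s < List.replicate (k + 1) 1 ++ t := by
  induction b generalizing k with
  | zero => exact List.Lex.rel Nat.one_pos
  | succ b ih =>
    obtain ⟨k, rfl⟩ : ∃ m, k = m + 1 := ⟨k - 1, by omega⟩
    exact List.Lex.cons (ih (by omega))

theorem exists_replicate_one_append_zero {w : List ℕ} (hw : ∀ a ∈ w, a < 2) :
    ∃ b ≤ w.length, ∃ s, w ++ [0] = List.replicate b 1 ++ 0 :: s := by
  induction w with
  | nil => exact ⟨0, le_rfl, [], rfl⟩
  | cons a w ih =>
    obtain ⟨b, hb, s, hs⟩ := ih fun x hx => hw x (List.mem_cons_of_mem a hx)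
    obtain rfl | rfl : a = 0 ∨ a = 1 := by have := hw a List.mem_cons_self; omega
    · exact ⟨0, Nat.zero_le _, w ++ [0], rfl⟩
    · exact ⟨b + 1, by simpa using hb, s, by simp [hs, List.replicate_succ]⟩

section Encoding

variable {k : ℕ}

@[simp]
theorem binSym_length (k x : ℕ) : (binSym k x).length = k := by simp [binSym]

theorem lt_two_of_mem_binSym {x a : ℕ} (ha : a ∈ binSym k x) : a < 2 := by
  obtain ⟨i, -, rfl⟩ := List.mem_map.mp ha
  exact Nat.mod_lt _ two_pos

theorem binSym_succ (k x : ℕ) : binSym (k + 1) x = binSym k (x / 2) ++ [x % 2] := by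
  simp only [binSym, List.range_succ, List.map_append, List.map_cons, List.map_nil,
    Nat.add_sub_cancel, Nat.sub_self, pow_zero, Nat.div_one, List.append_cancel_right_eq]
  refine List.map_congr_left fun i hi => ?_
  rw [List.mem_range] at hi
  rw [show k - i = k - 1 - i + 1 by omega, pow_succ', Nat.div_div_eq_div_mul]

theorem binSym_lt_binSym {a b : ℕ} (hab : a < b) (hb : b < 2 ^ k) :
    binSym k a < binSym k b := by
  induction k generalizing a b with
  | zero => omega
  | succ k ih =>
    rw [binSym_succ, binSym_succ]
    rcases (Nat.div_le_div_right hab.le : a / 2 ≤ b / 2).lt_or_eq with h | h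
    · exact List.append_lt_append_of_length_eq (by simp) (ih h (by omega)) _ _
    · rw [h]
      exact List.append_left_lt (List.Lex.rel (by omega))

@[simp]
theorem ebinSym_length (k x : ℕ) : (ebinSym k x).length = 2 * k + 3 := by
  simp [ebinSym]; omega

theorem ebinStr_cons (k a : ℕ) (S : List ℕ) :
    ebinStr k (a :: S) = ebinSym k a ++ ebinStr k S := by simp [ebinStr]

theorem ebinStr_length (k : ℕ) (S : List ℕ) :
    (ebinStr k S).length = S.length * (2 * k + 3) := by
  induction S with
  | nil => simp [ebinStr]
  | cons a S ih => rw [ebinStr_cons, List.length_append, ih, ebinSym_length]; simp; ring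

theorem ebinSym_eq_replicate_append (k x : ℕ) :
    ebinSym k x = List.replicate (k + 1) 1 ++ 0 :: (binSym k x ++ [0]) := by
  simp [ebinSym]

theorem ebinStr_lt_ebinStr {U V : List ℕ} (hV : ∀ a ∈ V, a < 2 ^ k) (h : U < V) :
    ebinStr k U < ebinStr k V := by
  induction h with
  | nil => exact List.Lex.nil
  | @rel a _ b _ hab =>
    simp only [ebinStr_cons, ebinSym_eq_replicate_append, List.append_assoc, List.cons_append]
    refine List.append_left_lt (List.Lex.cons ?_)
    exact List.append_lt_append_of_length_eq (by simp)
      (binSym_lt_binSym hab (hV b List.mem_cons_self)) _ _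
  | cons _ ih =>
    rw [ebinStr_cons, ebinStr_cons]
    exact List.append_left_lt (ih fun x hx => hV x (List.mem_cons_of_mem _ hx))

theorem ebinStr_lt_ebinStr_iff {U V : List ℕ} (hU : ∀ a ∈ U, a < 2 ^ k)
    (hV : ∀ a ∈ V, a < 2 ^ k) : ebinStr k U < ebinStr k V ↔ U < V := by
  refine ⟨fun h => ?_, ebinStr_lt_ebinStr hV⟩
  rcases lt_trichotomy U V with hlt | rfl | hgt
  · exact hlt
  · exact absurd h (List.lt_irrefl _)
  · exact absurd h (List.lt_asymm (ebinStr_lt_ebinStr hU hgt))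

theorem drop_ebinSym_eq {x i : ℕ} (hi₀ : 1 ≤ i) (hi : i < 2 * k + 3) :
    ∃ b ≤ k, ∃ s, (ebinSym k x).drop i = List.replicate b 1 ++ 0 :: s := by
  rw [ebinSym_eq_replicate_append]
  rcases le_or_gt i (k + 1) with h | h
  · exact ⟨k + 1 - i, by omega, binSym k x ++ [0],
      by simp [List.drop_append, Nat.sub_eq_zero_of_le h]⟩
  · obtain ⟨j, rfl⟩ : ∃ j, i = k + 2 + j := ⟨i - (k + 2), by omega⟩
    obtain ⟨b, hb, s, hs⟩ := exists_replicate_one_append_zero (w := (binSym k x).drop j)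
      fun a ha => lt_two_of_mem_binSym (List.mem_of_mem_drop ha)
    refine ⟨b, hb.trans (by simp), s, ?_⟩
    rw [← List.drop_drop, ← hs]
    simp [List.drop_append, Nat.sub_eq_zero_of_le (by omega : j ≤ k)]

theorem drop_ebinSym_append_lt_ebinStr {k x i : ℕ} (hi₀ : 1 ≤ i) (hi : i < 2 * k + 3)
    (u : List ℕ) {P : List ℕ} (hP : P ≠ []) : (ebinSym k x).drop i ++ u < ebinStr k P := by
  obtain ⟨p, P, rfl⟩ := List.exists_cons_of_ne_nil hP
  obtain ⟨b, hb, s, hs⟩ := drop_ebinSym_eq (x := x) hi₀ hi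
  rw [hs, ebinStr_cons, ebinSym_eq_replicate_append, List.append_assoc, List.cons_append,
    List.append_assoc]
  exact replicate_one_append_zero_lt hb _ _

end Encoding

section RangeBeg

variable {α : Type*} [LT α]

theorem rangeBeg_eq_card_filter (P T : List α) [DecidablePred fun i => T.drop i < P] :
    RangeBeg P T = ((Finset.range T.length).filter fun i => T.drop i < P).card := by
  have hset : { j | 1 ≤ j ∧ j ≤ T.length ∧ LexLt (Suf T j) P } =
      ((Finset.range T.length).filter fun i => T.drop i < P).image (· + 1) := by
    ext j
    simp only [Set.mem_ofPred_eq, Finset.coe_image, Finset.coe_filter, Finset.mem_range,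
      Set.mem_image]
    constructor
    · rintro ⟨h1, h2, h3⟩
      exact ⟨j - 1, ⟨by omega, h3⟩, by omega⟩
    · rintro ⟨i, ⟨hi, hlt⟩, rfl⟩
      exact ⟨by omega, by omega, by simpa [Suf, LexLt] using hlt⟩
  rw [RangeBeg, hset, Set.ncard_coe_finset,
    Finset.card_image_of_injective _ (add_left_injective 1)]

theorem rangeBeg_nil_left (T : List α) : RangeBeg [] T = 0 := by
  classical
  simp [rangeBeg_eq_card_filter]

theorem rangeBeg_nil_right (P : List α) : RangeBeg P [] = 0 := by
  classical
  simp [rangeBeg_eq_card_filter]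

theorem rangeBeg_cons (P : List α) (a : α) (T : List α) [Decidable (a :: T < P)] :
    RangeBeg P (a :: T) = RangeBeg P T + if a :: T < P then 1 else 0 := by
  classical
  simp only [rangeBeg_eq_card_filter, Finset.card_filter, List.length_cons,
    Finset.sum_range_succ', List.drop_succ_cons, List.drop_zero]

theorem rangeBeg_append_of_forall_lt {P U V : List α}
    (h : ∀ i < U.length, U.drop i ++ V < P) :
    RangeBeg P (U ++ V) = RangeBeg P V + U.length := by
  classical
  induction U with
  | nil => simp
  | cons a U ih =>
    have hfirst : a :: (U ++ V) < P := h 0 (by simp)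
    rw [List.cons_append, rangeBeg_cons, if_pos hfirst,
      ih fun i hi => h (i + 1) (by simpa using hi), List.length_cons, add_assoc]

end RangeBeg

theorem rangeBeg_ebinStr {k : ℕ} {P : List ℕ} (hP : P ≠ []) (hPk : ∀ a ∈ P, a < 2 ^ k)
    {T : List ℕ} (hTk : ∀ a ∈ T, a < 2 ^ k) :
    RangeBeg (ebinStr k P) (ebinStr k T) = RangeBeg P T + T.length * (2 * k + 2) := by
  induction T with
  | nil => simp [ebinStr, rangeBeg_nil_right]
  | cons a T ih =>
    set w := (ebinSym k a).tail
    have hw : ebinSym k a = 1 :: w := rfl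
    have hinner : ∀ i < w.length, w.drop i ++ ebinStr k T < ebinStr k P := fun i hi => by
      rw [List.drop_tail]
      exact drop_ebinSym_append_lt_ebinStr (by omega) (by simpa [w] using hi) _ hP
    have hhead : ebinStr k (a :: T) < ebinStr k P ↔ a :: T < P :=
      ebinStr_lt_ebinStr_iff hTk hPk
    have hwlen : w.length = 2 * k + 2 := by simp [w]
    calc RangeBeg (ebinStr k P) (ebinStr k (a :: T))
        = RangeBeg (ebinStr k P) (1 :: (w ++ ebinStr k T)) := by rw [ebinStr_cons, hw]; rfl
      _ = RangeBeg (ebinStr k P) (w ++ ebinStr k T)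
            + if ebinStr k (a :: T) < ebinStr k P then 1 else 0 := by
          rw [rangeBeg_cons, ebinStr_cons, hw, List.cons_append]
      _ = RangeBeg P T + T.length * (2 * k + 2) + w.length
            + if a :: T < P then 1 else 0 := by
          rw [rangeBeg_append_of_forall_lt hinner, ih fun x hx => hTk x (List.mem_cons_of_mem a hx)]
          simp only [hhead]
      _ = RangeBeg P (a :: T) + (a :: T).length * (2 * k + 2) := by
          rw [rangeBeg_cons, hwlen, List.length_cons]
          ring

theorem stmt9_general (σ : ℕ) (T P : List ℕ)
    (hTa : ∀ a ∈ T, a < σ) (hPa : ∀ a ∈ P, a < σ) :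
    RangeBeg P T =
      RangeBeg (ebinStr (Nat.clog 2 σ) P) (ebinStr (Nat.clog 2 σ) T) -
        ((ebinStr (Nat.clog 2 σ) T).length - T.length) := by
  set k := Nat.clog 2 σ
  rcases eq_or_ne P [] with rfl | hP
  · simp [ebinStr, rangeBeg_nil_left]
  have hσk : σ ≤ 2 ^ k := Nat.le_pow_clog one_lt_two σ
  rw [rangeBeg_ebinStr hP (fun a ha => (hPa a ha).trans_le hσk)
      (fun a ha => (hTa a ha).trans_le hσk), ebinStr_length,
    show T.length * (2 * k + 3) = T.length * (2 * k + 2) + T.length by ring]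
  omega

theorem stmt9 (σ : ℕ) (hσ : 2 ≤ σ) (T P : List ℕ)
    (hTa : ∀ a ∈ T, a < σ) (hPa : ∀ a ∈ P, a < σ) :
    RangeBeg P T =
      RangeBeg (ebinStr (Nat.clog 2 σ) P) (ebinStr (Nat.clog 2 σ) T) -
        ((ebinStr (Nat.clog 2 σ) T).length - T.length) :=
  stmt9_general σ T P hTa hPa
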